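/- (ABC theorem) Let G be an n×n quasidefinite matrix with factorization G = S₁⁻¹ H S₂^{-†}, and define φ₁(z) = S₁ χ(z), φ₂(z) = S₂ χ(z) for the vector χ(z) of the first n CMV basis functions. Then for all z₁, z₂ ∈ ℂ*: ∑_{k=0}^{n-1} \overline{φ_{2,k}(z₁)} H_k^{-1} φ_{1,k}(z₂) = χ(z₁)^† G^{-1} χ(z₂). -/

import Mathlib

open Matrix

/-- The CMV ordered basis of Laurent polynomials as functions on ℂ*. -/
noncomputable def cmv (l : ℕ) : ℂˣ → ℂ := fun z =>
  if l % 2 = 0 then (z : ℂ) ^ ((l / 2 : ℕ) : ℤ)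
  else (z : ℂ) ^ (-(((l / 2 : ℕ) : ℤ)) - 1)

/-!
Since `S₁` and `S₂` are unitriangular they are invertible, so `G⁻¹ = S₂ᴴ H⁻¹ S₁`. Substituting
this into `χ(z₁)ᴴ G⁻¹ χ(z₂)` and regrouping gives `(S₂ χ(z₁))ᴴ H⁻¹ (S₁ χ(z₂))`, which is the
kernel `∑ₖ conj(φ₂ₖ(z₁)) Hₖ⁻¹ φ₁ₖ(z₂)`.
-/

namespace Matrix

variable {n : Type*} [Fintype n] [DecidableEq n]

theorem det_eq_one_of_lowerUnitriangular {R : Type*} [CommRing R] [LinearOrder n]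
    {S : Matrix n n R} (hlo : ∀ i j, i < j → S i j = 0) (hdiag : ∀ i, S i i = 1) :
    S.det = 1 := by
  rw [det_of_isLowerTriangular S fun i j hij => hlo i j hij]
  simp [hdiag]

theorem inv_nonsing_inv_mul_diagonal_mul_nonsing_inv {K : Type*} [Field K]
    {A B : Matrix n n K} (hA : IsUnit A.det) (hB : IsUnit B.det) {h : n → K}
    (hh : ∀ k, h k ≠ 0) :
    (A⁻¹ * diagonal h * B⁻¹)⁻¹ = B * diagonal h⁻¹ * A := by
  apply inv_eq_right_inv
  calc A⁻¹ * diagonal h * B⁻¹ * (B * diagonal h⁻¹ * A)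
      = A⁻¹ * (diagonal h * (B⁻¹ * B) * diagonal h⁻¹) * A := by simp only [Matrix.mul_assoc]
    _ = 1 := by
      rw [nonsing_inv_mul B hB, Matrix.mul_one, diagonal_mul_diagonal,
        show (fun k => h k * h⁻¹ k) = fun _ => 1 from funext fun k => mul_inv_cancel₀ (hh k),
        diagonal_one, Matrix.mul_one, nonsing_inv_mul A hA]

theorem sum_sum_star_mul_conjTranspose_mul_diagonal_mul {R : Type*} [Semiring R] [StarRing R]
    (A B : Matrix n n R) (d x y : n → R) :
    ∑ i, ∑ j, star (x i) * (Bᴴ * diagonal d * A) i j * y j =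
      ∑ k, star ((B *ᵥ x) k) * d k * (A *ᵥ y) k := by
  calc ∑ i, ∑ j, star (x i) * (Bᴴ * diagonal d * A) i j * y j
      = star x ⬝ᵥ (Bᴴ * diagonal d * A) *ᵥ y := by
        simp only [dotProduct, mulVec, Finset.mul_sum, Pi.star_apply, mul_assoc]
    _ = star (B *ᵥ x) ⬝ᵥ diagonal d *ᵥ A *ᵥ y := by
        rw [← mulVec_mulVec, ← mulVec_mulVec, dotProduct_mulVec, star_mulVec]
    _ = ∑ k, star ((B *ᵥ x) k) * d k * (A *ᵥ y) k := by
        simp only [dotProduct, mulVec_diagonal, Pi.star_apply, mul_assoc]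

end Matrix

theorem abc_theorem_general (n : ℕ) (G S₁ S₂ : Matrix (Fin n) (Fin n) ℂ) (h : Fin n → ℂ)
    (hS₁lo : ∀ i j, i < j → S₁ i j = 0) (hS₁diag : ∀ i, S₁ i i = 1)
    (hS₂lo : ∀ i j, i < j → S₂ i j = 0) (hS₂diag : ∀ i, S₂ i i = 1)
    (hh : ∀ k, h k ≠ 0)
    (hG : G = S₁⁻¹ * Matrix.diagonal h * (S₂ᴴ)⁻¹) :
    ∀ z₁ z₂ : ℂˣ,
      ∑ k : Fin n,
          (starRingEnd ℂ) (∑ r, S₂ k r * cmv r z₁) * (h k)⁻¹ * (∑ r, S₁ k r * cmv r z₂) =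
        ∑ i : Fin n, ∑ j : Fin n,
          (starRingEnd ℂ) (cmv i z₁) * G⁻¹ i j * cmv j z₂ := by
  intro z₁ z₂
  have hS₁ : S₁.det = 1 := det_eq_one_of_lowerUnitriangular hS₁lo hS₁diag
  have hS₂ : (S₂ᴴ).det = 1 := by
    rw [det_conjTranspose, det_eq_one_of_lowerUnitriangular hS₂lo hS₂diag, star_one]
  rw [hG, inv_nonsing_inv_mul_diagonal_mul_nonsing_inv (by simp [hS₁]) (by simp [hS₂]) hh]
  exact (sum_sum_star_mul_conjTranspose_mul_diagonal_mul S₁ S₂ h⁻¹ _ _).symm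

/-- ABC theorem: for a quasidefinite `G = S₁⁻¹ H S₂^{-†}` and `φ₁ = S₁ χ`, `φ₂ = S₂ χ`,
the Christoffel–Darboux kernel `∑_k conj(φ_{2,k}(z₁)) H_k⁻¹ φ_{1,k}(z₂)` equals
`χ(z₁)† G⁻¹ χ(z₂)`. -/
theorem abc_theorem (n : ℕ) (G S₁ S₂ : Matrix (Fin n) (Fin n) ℂ) (h : Fin n → ℂ)
    (hquasi : ∀ (l : ℕ) (hl : l ≤ n),
      (Matrix.of fun i j : Fin l => G (Fin.castLE hl i) (Fin.castLE hl j)).det ≠ 0)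
    (hS₁lo : ∀ i j, i < j → S₁ i j = 0) (hS₁diag : ∀ i, S₁ i i = 1)
    (hS₂lo : ∀ i j, i < j → S₂ i j = 0) (hS₂diag : ∀ i, S₂ i i = 1)
    (hh : ∀ k, h k ≠ 0)
    (hG : G = S₁⁻¹ * Matrix.diagonal h * (S₂ᴴ)⁻¹) :
    ∀ z₁ z₂ : ℂˣ,
      ∑ k : Fin n,
          (starRingEnd ℂ) (∑ r, S₂ k r * cmv r z₁) * (h k)⁻¹ * (∑ r, S₁ k r * cmv r z₂) =
        ∑ i : Fin n, ∑ j : Fin n,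
          (starRingEnd ℂ) (cmv i z₁) * G⁻¹ i j * cmv j z₂ :=
  abc_theorem_general n G S₁ S₂ h hS₁lo hS₁diag hS₂lo hS₂diag hh hG
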